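/- Let κ ∈ {1, −1} and let V be a complex vector space with a ℂ-bilinear form B : V × V → ℂ satisfying B(x, y) = κ · B(y, x) for all x, y. Let a₁, …, a_m and b₁, …, b_n be vectors in V such that B(a_i, a_j) = 0 and B(b_i, b_j) = 0 for all indices i, j. Assume m + n = 2N is even and form the list (x₁, …, x_{2N}) := (a_m, a_{m−1}, …, a₁, b₁, …, b_n). Define A := (1/N!) · Σ_{σ ∈ S_{2N}} κ^{|σ|} · Π_{j=1}^{N} B(x_{σ(j)}, x_{σ(2N+1−j)}), where κ^{|σ|} denotes the sign of the permutation σ if κ = −1 and equals 1 if κ = 1. Then A = 0 if m ≠ n, and if m = n (= N) then A = 2^n · Σ_{σ ∈ S_n} κ^{|σ|} · Π_{j=1}^{n} B(a_j, b_{σ(j)}). -/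

import Mathlib

/-! Number the positions of `Fin (2N)` from the centre: the `k`-th pair is `(N - 1 - k, N + k)`,
which carries `aₖ` and `bₖ` when `m = n`. A term of the sum vanishes unless `σ` sends every pair
to one position below `m` and one above it, and such a pairing of `Fin (2N)` forces `m = N`.
For `m = n` the surviving permutations are exactly `(α, β) * flip ε`, where `α, β ∈ S_N` move
the `a`- and the `b`-slots and `ε` reverses some pairs. Reversing a pair costs a factor `κ` in
the sign and, by `κ`-symmetry of `B`, another in the product, so all `2^N` choices of `ε`
contribute equally; finally the term depends on `(α, β)` only through `β α⁻¹`, giving `N!`. -/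

/-- `κ^{|σ|}`: the sign of the permutation `σ` if `κ = -1`, and `1` if `κ = 1`. -/
noncomputable def ksgn (κ : ℂ) {n : ℕ} (σ : Equiv.Perm (Fin n)) : ℂ :=
  if κ = -1 then ((Equiv.Perm.sign σ : ℤ) : ℂ) else 1

open Finset Equiv Equiv.Perm

noncomputable def kChar (κ : ℂ) : ℤˣ →* ℂ where
  toFun u := if κ = -1 then ((u : ℤ) : ℂ) else 1
  map_one' := by simp
  map_mul' u v := by split_ifs <;> simp

lemma ksgn_eq_kChar_sign (κ : ℂ) {n : ℕ} (σ : Perm (Fin n)) : ksgn κ σ = kChar κ (sign σ) := rfl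

lemma kChar_neg_one {κ : ℂ} (hκ : κ = 1 ∨ κ = -1) : kChar κ (-1) = κ := by
  rcases hκ with rfl | rfl <;> norm_num [kChar]

lemma kChar_mul_self (κ : ℂ) (u : ℤˣ) : kChar κ u * kChar κ u = 1 := by
  rw [← map_mul, Int.units_mul_self, map_one]

lemma Equiv.Perm.exists_prodCongrLeft_eq {α β : Type*} (h : Perm (α × β))
    (hh : ∀ x, (h x).2 = x.2) : ∃ f : β → Perm α, prodCongrLeft f = h := by
  have hfix : ∀ a b, ((h (a, b)).1, b) = h (a, b) := fun a b => Prod.ext rfl (hh (a, b)).symm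
  have hfix' : ∀ a b, ((h.symm (a, b)).1, b) = h.symm (a, b) := fun a b =>
    Prod.ext rfl (by simpa using hh (h.symm (a, b)))
  refine ⟨fun b => ⟨fun a => (h (a, b)).1, fun a => (h.symm (a, b)).1, fun a => ?_, fun a => ?_⟩,
    ?_⟩
  · simp [hfix]
  · simp [hfix']
  · ext ⟨a, b⟩ <;> simp [hh]

lemma sum_sign_mul_sign_mul_prod {ι R : Type*} [Fintype ι] [DecidableEq ι] [CommSemiring R]
    (χ : ℤˣ →* R) (g : ι → ι → R) :
    ∑ α : Perm ι, ∑ β : Perm ι, χ (sign α) * χ (sign β) * ∏ j, g (α j) (β j) =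
      (Fintype.card ι).factorial * ∑ ρ : Perm ι, χ (sign ρ) * ∏ i, g i (ρ i) := by
  have hterm : ∀ α β : Perm ι, χ (sign α) * χ (sign β) * ∏ j, g (α j) (β j) =
      χ (sign (β * α⁻¹)) * ∏ i, g i ((β * α⁻¹) i) := fun α β => by
    rw [map_mul, map_mul, sign_inv, ← Equiv.prod_comp α (fun i => g i ((β * α⁻¹) i))]
    simp [mul_comm]
  have hshift : ∀ α : Perm ι, ∑ β : Perm ι, χ (sign (β * α⁻¹)) * ∏ i, g i ((β * α⁻¹) i) =
      ∑ ρ : Perm ι, χ (sign ρ) * ∏ i, g i (ρ i) := fun α =>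
    Equiv.sum_comp (Equiv.mulRight α⁻¹) (fun ρ => χ (sign ρ) * ∏ i, g i (ρ i))
  simp_rw [hterm, hshift]
  simp [Fintype.card_perm]

section Pairs

variable {ι : Type*}

def pairFlip (ε : ι → Bool) : Perm (ι × Bool) :=
  prodCongrRight fun j => bif ε j then swap false true else 1

lemma pairFlip_apply (ε : ι → Bool) (j : ι) (c : Bool) :
    pairFlip ε (j, c) = (j, xor (ε j) c) := by
  cases h : ε j <;> cases c <;> simp [pairFlip, h]

lemma pairFlip_mul_self (ε : ι → Bool) : pairFlip ε * pairFlip ε = 1 := by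
  ext ⟨j, c⟩ <;> simp [pairFlip_apply]

lemma exists_eq_prodCongrLeft_mul_pairFlip {π : Perm (ι × Bool)}
    (hπ : ∀ j, (π (j, false)).2 ≠ (π (j, true)).2) :
    ∃ f : Bool → Perm ι, ∃ ε : ι → Bool, π = prodCongrLeft f * pairFlip ε := by
  let ε : ι → Bool := fun j => (π (j, false)).2
  have hfalse : ∀ j, (π (j, false)).2 = ε j := fun _ => rfl
  have htrue : ∀ j, (π (j, true)).2 = !ε j := fun j => Bool.eq_not.mpr (hπ j).symm
  obtain ⟨f, hf⟩ := (π * pairFlip ε).exists_prodCongrLeft_eq fun ⟨j, c⟩ => by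
    cases c <;> cases h : ε j <;> simp [pairFlip_apply, hfalse, htrue, h]
  exact ⟨f, ε, by rw [hf, mul_assoc, pairFlip_mul_self, mul_one]⟩

lemma prodCongrLeft_mul_pairFlip_injective :
    Function.Injective fun t : (Bool → Perm ι) × (ι → Bool) =>
      prodCongrLeft t.1 * pairFlip t.2 := by
  rintro ⟨f, ε⟩ ⟨f', ε'⟩ h
  have hε : ε = ε' := funext fun j => by
    simpa [pairFlip_apply] using congrArg (fun π : Perm (ι × Bool) => (π (j, false)).2) h
  subst hε
  have hf := mul_right_cancel h
  refine Prod.ext (funext fun c => Equiv.ext fun k => ?_) rfl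
  simpa using congrArg (fun π : Perm (ι × Bool) => (π (k, c)).1) hf

variable [Fintype ι] [DecidableEq ι]

lemma kChar_sign_pairFlip {κ : ℂ} (hκ : κ = 1 ∨ κ = -1) (ε : ι → Bool) :
    kChar κ (sign (pairFlip ε)) = ∏ j, bif ε j then κ else 1 := by
  rw [pairFlip, sign_prodCongrRight, map_prod]
  refine prod_congr rfl fun j _ => ?_
  cases ε j
  · simp
  · simp [kChar_neg_one hκ]

variable {V : Type*} [AddCommGroup V] [Module ℂ V]

noncomputable def pairTerm (κ : ℂ) (B : V →ₗ[ℂ] V →ₗ[ℂ] ℂ) (y : ι × Bool → V)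
    (π : Perm (ι × Bool)) : ℂ :=
  kChar κ (sign π) * ∏ j, B (y (π (j, false))) (y (π (j, true)))

variable {κ : ℂ} {B : V →ₗ[ℂ] V →ₗ[ℂ] ℂ} {y : ι × Bool → V}

lemma pairTerm_mul_pairFlip (hκ : κ = 1 ∨ κ = -1) (hB : ∀ x y, B x y = κ * B y x)
    (π : Perm (ι × Bool)) (ε : ι → Bool) :
    pairTerm κ B y (π * pairFlip ε) = pairTerm κ B y π := by
  have hfactor : ∀ j, B (y ((π * pairFlip ε) (j, false))) (y ((π * pairFlip ε) (j, true))) =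
      (bif ε j then κ else 1) * B (y (π (j, false))) (y (π (j, true))) := by
    intro j
    cases h : ε j
    · simp [pairFlip_apply, h]
    · simpa [pairFlip_apply, h] using hB _ _
  simp only [pairTerm, prod_congr rfl fun j _ => hfactor j, prod_mul_distrib, map_mul,
    ← kChar_sign_pairFlip hκ]
  linear_combination (kChar κ (sign π) * ∏ j, B (y (π (j, false))) (y (π (j, true)))) *
    kChar_mul_self κ (sign (pairFlip ε))

lemma apply_ne_of_pairTerm_ne_zero {β : Type*} {c : ι × Bool → β}
    (hy : ∀ u v, c u = c v → B (y u) (y v) = 0) {π : Perm (ι × Bool)}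
    (hπ : pairTerm κ B y π ≠ 0) (j : ι) : c (π (j, false)) ≠ c (π (j, true)) :=
  fun h => hπ (mul_eq_zero_of_right _ (prod_eq_zero (mem_univ j) (hy _ _ h)))

lemma pairTerm_prodCongrLeft (f : Bool → Perm ι) :
    pairTerm κ B y (prodCongrLeft f) = kChar κ (sign (f false)) * kChar κ (sign (f true)) *
      ∏ j, B (y (f false j, false)) (y (f true j, true)) := by
  simp [pairTerm, sign_prodCongrLeft, mul_comm]

theorem sum_pairTerm (hκ : κ = 1 ∨ κ = -1) (hB : ∀ x y, B x y = κ * B y x)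
    (hy : ∀ k l c, B (y (k, c)) (y (l, c)) = 0) :
    ∑ π, pairTerm κ B y π = (Fintype.card ι).factorial * 2 ^ Fintype.card ι *
      ∑ ρ : Perm ι, kChar κ (sign ρ) * ∏ i, B (y (i, false)) (y (ρ i, true)) := by
  have hmixed : ∀ π, pairTerm κ B y π ≠ 0 → ∀ j, (π (j, false)).2 ≠ (π (j, true)).2 :=
    fun π => apply_ne_of_pairTerm_ne_zero (c := Prod.snd) fun u v huv => by
      obtain ⟨k, c⟩ := u; obtain ⟨l, c⟩ := v; cases huv; exact hy k l c
  calc ∑ π, pairTerm κ B y π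
      = ∑ t : (Bool → Perm ι) × (ι → Bool), pairTerm κ B y (prodCongrLeft t.1 * pairFlip t.2) := by
        refine (sum_bij_ne_zero (fun t _ _ => prodCongrLeft t.1 * pairFlip t.2)
          (fun _ _ _ => mem_univ _) (fun _ _ _ _ _ _ h => prodCongrLeft_mul_pairFlip_injective h)
          (fun π _ hπ => ?_) (fun _ _ _ => rfl)).symm
        obtain ⟨f, ε, rfl⟩ := exists_eq_prodCongrLeft_mul_pairFlip (hmixed π hπ)
        exact ⟨(f, ε), mem_univ _, hπ, rfl⟩
    _ = 2 ^ Fintype.card ι * ∑ f : Bool → Perm ι, pairTerm κ B y (prodCongrLeft f) := by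
        simp [pairTerm_mul_pairFlip hκ hB, Fintype.sum_prod_type, mul_sum]
    _ = 2 ^ Fintype.card ι * ∑ α : Perm ι, ∑ β : Perm ι, kChar κ (sign α) * kChar κ (sign β) *
          ∏ j, B (y (α j, false)) (y (β j, true)) := by
        rw [← Fintype.sum_prod_type', ← (boolArrowEquivProd _).sum_comp]
        simp [pairTerm_prodCongrLeft]
    _ = _ := by
        rw [sum_sign_mul_sign_mul_prod (kChar κ) fun i i' => B (y (i, false)) (y (i', true))]
        ring

end Pairs

lemma card_filter_eq_card_of_pairing {ι α : Type*} [Fintype ι] [Fintype α] (e : ι × Bool ≃ α)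
    (p : α → Prop) [DecidablePred p] (hp : ∀ j, ¬ (p (e (j, false)) ↔ p (e (j, true)))) :
    #{x | p x} = Fintype.card ι := by
  rw [card_filter, ← e.sum_comp, Fintype.sum_prod_type, Fintype.card_eq_sum_ones]
  refine sum_congr rfl fun j _ => ?_
  have := hp j
  rw [Fintype.sum_bool]
  by_cases h : p (e (j, false)) <;> simp_all

-- `(k, false) ↦ N - 1 - k` and `(k, true) ↦ N + k`
def centerPairing (N : ℕ) : Fin N × Bool ≃ Fin (2 * N) :=
  (prodComm _ _).trans <| (boolProdEquivSum _).trans <|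
    (Equiv.sumCongr Fin.revPerm (Equiv.refl _)).trans <|
      finSumFinEquiv.trans (finCongr (two_mul N).symm)

lemma centerPairing_symm_castLE {N : ℕ} (j : Fin N) (h : N ≤ 2 * N) :
    (centerPairing N).symm (Fin.castLE h j) = (j.rev, false) := by
  rw [Equiv.symm_apply_eq]; ext; simp [centerPairing]

lemma centerPairing_symm_rev_castLE {N : ℕ} (j : Fin N) (h : N ≤ 2 * N) :
    (centerPairing N).symm (Fin.castLE h j).rev = (j.rev, true) := by
  rw [Equiv.symm_apply_eq]; ext; simp [centerPairing]; omega

section Append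

variable {V : Type*} {m n N : ℕ}

lemma append_rev_centerPairing_false (a b : Fin N → V) (h : 2 * N = N + N) (k : Fin N) :
    Fin.append (fun i => a i.rev) b (Fin.cast h (centerPairing N (k, false))) = a k := by
  simp [centerPairing]

lemma append_rev_centerPairing_true (a b : Fin N → V) (h : 2 * N = N + N) (k : Fin N) :
    Fin.append (fun i => a i.rev) b (Fin.cast h (centerPairing N (k, true))) = b k := by
  simp [centerPairing, -Fin.natAdd_eq_addNat]

lemma apply_append_eq_zero {R : Type*} {B : V → V → R} [Zero R] {u : Fin m → V} {v : Fin n → V}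
    (hu : ∀ i j, B (u i) (u j) = 0) (hv : ∀ i j, B (v i) (v j) = 0) {i j : Fin (m + n)}
    (hij : (i : ℕ) < m ↔ (j : ℕ) < m) : B (Fin.append u v i) (Fin.append u v j) = 0 := by
  induction i using Fin.addCases <;> induction j using Fin.addCases <;> simp_all

end Append

lemma sum_ksgn_eq_sum_pairTerm {V : Type*} [AddCommGroup V] [Module ℂ V] (κ : ℂ)
    (B : V →ₗ[ℂ] V →ₗ[ℂ] ℂ) {N : ℕ} (x : Fin (2 * N) → V) (h : N ≤ 2 * N) :
    ∑ σ : Perm (Fin (2 * N)), ksgn κ σ * ∏ j : Fin N,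
        B (x (σ (Fin.castLE h j))) (x (σ (Fin.castLE h j).rev)) =
      ∑ π, pairTerm κ B (fun p => x (centerPairing N p)) π := by
  rw [← (centerPairing N).permCongr.sum_comp]
  refine sum_congr rfl fun π _ => ?_
  simp only [pairTerm, ksgn_eq_kChar_sign, sign_permCongr, permCongr_apply,
    centerPairing_symm_castLE, centerPairing_symm_rev_castLE]
  congr 1
  exact Fintype.prod_equiv Fin.revPerm _ _ fun _ => rfl

lemma pairTerm_append_centerPairing_eq_zero {V : Type*} [AddCommGroup V] [Module ℂ V] {κ : ℂ}
    {B : V →ₗ[ℂ] V →ₗ[ℂ] ℂ} {m n N : ℕ} (hmn : m + n = 2 * N) (hne : m ≠ n) {u : Fin m → V}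
    {v : Fin n → V} (hu : ∀ i j, B (u i) (u j) = 0) (hv : ∀ i j, B (v i) (v j) = 0)
    (π : Perm (Fin N × Bool)) :
    pairTerm κ B (fun p => Fin.append u v (Fin.cast hmn.symm (centerPairing N p))) π = 0 := by
  by_contra hπ
  have hmixed := apply_ne_of_pairTerm_ne_zero (c := fun p => (centerPairing N p : ℕ) < m)
    (fun p q hpq => apply_append_eq_zero (B := fun x y : V => B x y) hu hv (iff_of_eq hpq)) hπ
  have hcard := card_filter_eq_card_of_pairing (π.trans (centerPairing N)) (fun i => (i : ℕ) < m)
    fun j h => hmixed j (propext h)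
  rw [Fin.card_filter_val_lt, Fintype.card_fin] at hcard
  omega

theorem stmt_10 {V : Type*} [AddCommGroup V] [Module ℂ V]
    (κ : ℂ) (hκ : κ = 1 ∨ κ = -1)
    (B : V →ₗ[ℂ] V →ₗ[ℂ] ℂ) (hBsym : ∀ x y, B x y = κ * B y x)
    (m n N : ℕ) (hmn : m + n = 2 * N)
    (a : Fin m → V) (b : Fin n → V)
    (ha : ∀ i j, B (a i) (a j) = 0) (hb : ∀ i j, B (b i) (b j) = 0) :
    (m ≠ n →
      (N.factorial : ℂ)⁻¹ * ∑ σ : Equiv.Perm (Fin (2 * N)), ksgn κ σ *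
        ∏ j : Fin N,
          B (Fin.append (fun i => a i.rev) b (Fin.cast hmn.symm (σ (Fin.castLE (by omega) j))))
            (Fin.append (fun i => a i.rev) b
              (Fin.cast hmn.symm (σ (Fin.castLE (by omega : N ≤ 2 * N) j).rev))) = 0) ∧
    (∀ h : m = n,
      (N.factorial : ℂ)⁻¹ * ∑ σ : Equiv.Perm (Fin (2 * N)), ksgn κ σ *
        ∏ j : Fin N,
          B (Fin.append (fun i => a i.rev) b (Fin.cast hmn.symm (σ (Fin.castLE (by omega) j))))
            (Fin.append (fun i => a i.rev) b
              (Fin.cast hmn.symm (σ (Fin.castLE (by omega : N ≤ 2 * N) j).rev))) =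
      2 ^ n * ∑ σ : Equiv.Perm (Fin n), ksgn κ σ *
        ∏ j : Fin n, B (a (Fin.cast h.symm j)) (b (σ j))) := by
  rw [sum_ksgn_eq_sum_pairTerm κ B fun i => Fin.append (fun i => a i.rev) b (Fin.cast hmn.symm i)]
  refine ⟨fun hne => mul_eq_zero_of_right _ (sum_eq_zero fun π _ =>
    pairTerm_append_centerPairing_eq_zero hmn hne (fun _ _ => ha _ _) hb π), ?_⟩
  rintro rfl
  obtain rfl : m = N := by omega
  have hy : ∀ k l c,
      B (Fin.append (fun i => a i.rev) b (Fin.cast hmn.symm (centerPairing m (k, c))))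
        (Fin.append (fun i => a i.rev) b (Fin.cast hmn.symm (centerPairing m (l, c)))) = 0 := by
    rintro k l (_ | _) <;>
      simp [append_rev_centerPairing_false, append_rev_centerPairing_true, ha, hb]
  rw [sum_pairTerm hκ hBsym hy, Fintype.card_fin, mul_assoc,
    inv_mul_cancel_left₀ (Nat.cast_ne_zero.mpr m.factorial_ne_zero)]
  simp [append_rev_centerPairing_false, append_rev_centerPairing_true, ksgn_eq_kChar_sign]
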